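/- For β > β_c, the sequence of Gibbs measures μ_{β,n} converges weakly (i.e., ∫f dμ_{β,n} converges for every continuous f on [0,1]) to a limit probability measure μ_* which is supported on the middle-third Cantor set: μ_*(C) = 1, where C = ⋂ C_m. -/

import Mathlib

open MeasureTheory Set Real Filter

noncomputable def cantorStage : ℕ → Set ℝ
  | 0 => Set.Icc 0 1
  | (m+1) => (fun x => x / 3) '' cantorStage m ∪ (fun x => (x + 2) / 3) '' cantorStage m

noncomputable def Bset (m : ℕ) : Set ℝ := cantorStage (m - 1) \ cantorStage m

noncomputable def psi (A : ℕ → ℝ) (n : ℕ) (x : ℝ) : ℝ :=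
  -∑ k ∈ Finset.Icc 1 n, A k * (Bset k).indicator (fun _ => (1:ℝ)) x

noncomputable def hc : ℝ := Real.log (3/2)

noncomputable def psiα (α : ℝ) : ℕ → ℝ → ℝ := psi (fun k => α * k)

noncomputable def Zf (α β : ℝ) (n : ℕ) : ℝ :=
  ∫ x in Set.Icc (0:ℝ) 1, Real.exp (-β * psiα α n x)

noncomputable def gibbs (α β : ℝ) (n : ℕ) (A : Set ℝ) : ℝ :=
  (∫ x in A ∩ Set.Icc (0:ℝ) 1, Real.exp (-β * psiα α n x)) / Zf α β n

/-!
On `[0,1]` the Gibbs density is `1 + ∑_{k ≤ n} (e^{βαk} - 1) 1_{B_k}`, the gaps `B_k` being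
disjoint. Hence `∫ f dμ_{β,n}` is a weighted mean of `∫₀¹ f` and of the averages of `f` over the
gaps `B_k`, with weights `(e^{βαk} - 1) |B_k|` of order `(2 e^{βα} / 3)^k`. For `β > β_c` these
weights are not summable, so the mean is governed by the gaps of large index, and it suffices that
the average of `f` over `B_k` tends to `∫ f dμ_*`.

The limit `μ_*` is the Cantor measure, the image of Lebesgue measure on `[0,1)` under the map
turning binary digits `0, 1` into ternary digits `0, 2`. For `S F y = (F (y/3) + F ((y+2)/3)) / 2`,
self-similarity gives `∫_{C_m} F = (2/3)^m ∫₀¹ S^m F` and `∫ F dμ_* = ∫ S^m F dμ_*`. On `[0,1]`,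
`S^m F` oscillates by at most the modulus of continuity of `F` at scale `3^{-m}`, so the normalised
averages of `F` over `C_m`, hence over `B_{m+1} = C_m \ C_{m+1}`, converge to `∫ F dμ_*`.
-/

open Topology

theorem exp_sum_indicator_of_pairwiseDisjoint {ι X : Type*} {s : Finset ι} {A : ι → Set X}
    (hA : (s : Set ι).PairwiseDisjoint A) (c : ι → ℝ) (x : X) :
    exp (∑ i ∈ s, (A i).indicator (fun _ => c i) x) =
      1 + ∑ i ∈ s, (A i).indicator (fun _ => exp (c i) - 1) x := by
  by_cases hx : ∃ j ∈ s, x ∈ A j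
  · obtain ⟨j, hj, hxj⟩ := hx
    have hxi : ∀ i ∈ s, i ≠ j → x ∉ A i := fun i hi hij hxi =>
      Set.disjoint_left.1 (hA hi hj hij) hxi hxj
    rw [Finset.sum_eq_single_of_mem j hj fun i hi hij => indicator_of_notMem (hxi i hi hij) _,
      Finset.sum_eq_single_of_mem j hj fun i hi hij => indicator_of_notMem (hxi i hi hij) _,
      indicator_of_mem hxj, indicator_of_mem hxj]
    ring
  · push Not at hx
    rw [Finset.sum_eq_zero fun i hi => indicator_of_notMem (hx i hi) _,
      Finset.sum_eq_zero fun i hi => indicator_of_notMem (hx i hi) _, exp_zero, add_zero]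

open Asymptotics in
theorem tendsto_add_sum_div_add_sum_of_not_summable {a x : ℕ → ℝ} {L : ℝ} (c d : ℝ)
    (ha : ∀ k, 0 ≤ a k) (ha' : ¬Summable a) (hx : Tendsto x atTop (𝓝 L)) :
    Tendsto (fun n => (c + ∑ k ∈ Finset.range n, a k * x k) / (d + ∑ k ∈ Finset.range n, a k))
      atTop (𝓝 L) := by
  have hA := (not_summable_iff_tendsto_nat_atTop_of_nonneg ha).1 ha'
  have hconst (e : ℝ) : (fun _ => e) =o[atTop] fun n => ∑ k ∈ Finset.range n, a k :=
    isLittleO_const_left.2 (Or.inr (tendsto_norm_atTop_atTop.comp hA))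
  have hsum : (fun n => ∑ k ∈ Finset.range n, a k * (x k - L)) =o[atTop]
      fun n => ∑ k ∈ Finset.range n, a k := by
    refine IsLittleO.sum_range ?_ ha hA
    simpa using (isBigO_refl a atTop).mul_isLittleO
      ((isLittleO_one_iff ℝ).2 (tendsto_sub_nhds_zero_iff.2 hx))
  have hequiv : (fun n => d + ∑ k ∈ Finset.range n, a k) ~[atTop]
      fun n => ∑ k ∈ Finset.range n, a k := by
    simpa [IsEquivalent, Pi.sub_def] using hconst d
  have hlim := (((hconst (c - d * L)).add hsum).trans_isBigO hequiv.symm.isBigO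
    |>.tendsto_div_nhds_zero).const_add L
  rw [add_zero] at hlim
  refine hlim.congr' ?_
  filter_upwards [(tendsto_atTop_add_const_left _ d hA).eventually_gt_atTop 0] with n hn
  simp only [mul_sub, Finset.sum_sub_distrib, ← Finset.sum_mul]
  field_simp
  ring

theorem abs_integral_sub_le_of_ae {X : Type*} [MeasurableSpace X] {μ : Measure X}
    [IsProbabilityMeasure μ] {g : X → ℝ} (hg : Integrable g μ) {c ε : ℝ}
    (h : ∀ᵐ x ∂μ, |g x - c| ≤ ε) : |∫ x, g x ∂μ - c| ≤ ε := by
  have := norm_integral_le_of_norm_le_const (f := fun x => g x - c) h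
  rwa [probReal_univ, mul_one, integral_sub hg (integrable_const c), integral_const,
    probReal_univ, one_smul] at this

theorem abs_integral_sub_integral_le {X : Type*} [MeasurableSpace X] {μ ν : Measure X}
    [IsProbabilityMeasure μ] [IsProbabilityMeasure ν] {s : Set X} (hμ : ∀ᵐ x ∂μ, x ∈ s)
    (hν : ∀ᵐ x ∂ν, x ∈ s) {g : X → ℝ} (hgμ : Integrable g μ) (hgν : Integrable g ν) {ε : ℝ}
    (hg : ∀ y ∈ s, ∀ z ∈ s, |g y - g z| ≤ ε) : |∫ x, g x ∂μ - ∫ x, g x ∂ν| ≤ ε := by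
  refine abs_integral_sub_le_of_ae hgμ (hμ.mono fun y hy => ?_)
  rw [abs_sub_comm]
  exact abs_integral_sub_le_of_ae hgν (hν.mono fun z hz => hg z hz y hy)

theorem setIntegral_image_add_div {E : Type*} [NormedAddCommGroup E] [NormedSpace ℝ E]
    {s : Set ℝ} (hs : MeasurableSet s) {k : ℝ} (hk : 0 < k) (c : ℝ) (F : ℝ → E) :
    ∫ x in (fun y => (y + c) / k) '' s, F x = k⁻¹ • ∫ y in s, F ((y + c) / k) := by
  rw [integral_image_eq_integral_abs_deriv_smul (f := fun y => (y + c) / k) hs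
    (fun y _ => ((hasDerivAt_id y).add_const c).div_const k |>.hasDerivWithinAt)
    (fun y _ z _ h => by simpa [hk.ne'] using h), ← integral_smul]
  simp [abs_of_pos hk, div_eq_inv_mul]

theorem MeasurableSet.image_add_div {s : Set ℝ} (hs : MeasurableSet s) {k : ℝ} (hk : k ≠ 0)
    (c : ℝ) : MeasurableSet ((fun y => (y + c) / k) '' s) :=
  hs.image_of_continuousOn_injOn (by fun_prop) fun y _ z _ h => by simpa [hk] using h

-- The `+ 0` makes both halves instances of `setIntegral_image_add_div`.
theorem Ico_zero_one_eq_union_image :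
    Ico (0 : ℝ) 1 = (fun y => (y + 0) / 2) '' Ico 0 1 ∪ (fun y => (y + 1) / 2) '' Ico 0 1 := by
  ext x
  constructor
  · rintro ⟨h0, h1⟩
    rcases lt_or_ge x (1 / 2) with hx | hx
    · exact Or.inl ⟨2 * x, ⟨by linarith, by linarith⟩, by ring⟩
    · exact Or.inr ⟨2 * x - 1, ⟨by linarith, by linarith⟩, by ring⟩
  · rintro (⟨y, ⟨h0, h1⟩, rfl⟩ | ⟨y, ⟨h0, h1⟩, rfl⟩) <;> constructor <;> linarith

namespace Real

theorem digits_add_div_zero {b : ℕ} [NeZero b] {y : ℝ} (hy : y ∈ Ico 0 1) (d : Fin b) :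
    digits ((y + d) / b) b 0 = d := by
  have hb : (b : ℝ) ≠ 0 := Nat.cast_ne_zero.2 (NeZero.ne b)
  rw [digits, zero_add, pow_one, div_mul_cancel₀ _ hb, Nat.floor_add_natCast hy.1,
    Nat.floor_eq_zero.2 hy.2, zero_add]
  simp

theorem digits_add_div_succ {b : ℕ} [NeZero b] {y : ℝ} (hy : 0 ≤ y) (d : Fin b) (i : ℕ) :
    digits ((y + d) / b) b (i + 1) = digits y b i := by
  have hb : (b : ℝ) ≠ 0 := Nat.cast_ne_zero.2 (NeZero.ne b)
  have : (y + d) / b * b ^ (i + 1 + 1) = y * b ^ (i + 1) + ((d * b ^ (i + 1) : ℕ) : ℝ) := by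
    push_cast; field_simp; ring
  rw [digits, digits, this, Nat.floor_add_natCast (by positivity)]
  ext
  simp [Nat.add_mod, Nat.mul_mod, Nat.pow_mod]

end Real

instance : IsProbabilityMeasure (volume.restrict (Ico (0 : ℝ) 1)) := ⟨by simp⟩

instance : IsProbabilityMeasure (volume.restrict (Icc (0 : ℝ) 1)) := ⟨by simp⟩

theorem cantorStage_eq_preCantorSet : cantorStage = preCantorSet := by
  ext m : 1
  induction m with
  | zero => rfl
  | succ m ih => simp only [cantorStage, preCantorSet_succ, ih, add_comm]

theorem iInter_cantorStage : ⋂ m, cantorStage m = cantorSet := by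
  rw [cantorStage_eq_preCantorSet, cantorSet]

theorem cantorStage_antitone : Antitone cantorStage := by
  rw [cantorStage_eq_preCantorSet]; exact preCantorSet_antitone

theorem cantorStage_subset_Icc (m : ℕ) : cantorStage m ⊆ Icc 0 1 := by
  rw [cantorStage_eq_preCantorSet]; exact preCantorSet_subset_unitInterval

theorem measurableSet_cantorStage (m : ℕ) : MeasurableSet (cantorStage m) := by
  rw [cantorStage_eq_preCantorSet]; exact (isClosed_preCantorSet m).measurableSet

theorem measurableSet_Bset (k : ℕ) : MeasurableSet (Bset k) :=
  (measurableSet_cantorStage _).diff (measurableSet_cantorStage _)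

theorem Bset_subset_Icc (k : ℕ) : Bset k ⊆ Icc 0 1 :=
  sdiff_subset.trans (cantorStage_subset_Icc _)

open Function in
theorem pairwise_disjoint_Bset : Pairwise (Disjoint on Bset) := by
  intro j k hjk
  wlog hlt : j < k generalizing j k
  · exact (this hjk.symm (hjk.symm.lt_of_le (not_lt.1 hlt))).symm
  exact Set.disjoint_left.2 fun x hxj hxk =>
    hxj.2 (cantorStage_antitone (Nat.le_sub_one_of_lt hlt) hxk.1)

noncomputable def cantorAvg (F : ℝ → ℝ) (y : ℝ) : ℝ := (F (y / 3) + F ((y + 2) / 3)) / 2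

theorem continuous_cantorAvg {F : ℝ → ℝ} (hF : Continuous F) : Continuous (cantorAvg F) := by
  unfold cantorAvg; fun_prop

theorem continuous_cantorAvg_iterate {F : ℝ → ℝ} (hF : Continuous F) (m : ℕ) :
    Continuous (cantorAvg^[m] F) := by
  induction m generalizing F with
  | zero => exact hF
  | succ m ih => exact ih (continuous_cantorAvg hF)

theorem setIntegral_cantorStage_succ {F : ℝ → ℝ} (hF : Continuous F) (m : ℕ) :
    ∫ x in cantorStage (m + 1), F x = 2 / 3 * ∫ y in cantorStage m, cantorAvg F y := by
  have hC := measurableSet_cantorStage m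
  have hsplit : cantorStage (m + 1) = (fun y : ℝ => (y + 0) / 3) '' cantorStage m ∪
      (fun y : ℝ => (y + 2) / 3) '' cantorStage m := by simp only [add_zero]; rfl
  have hdisj : Disjoint ((fun y : ℝ => (y + 0) / 3) '' cantorStage m)
      ((fun y : ℝ => (y + 2) / 3) '' cantorStage m) := by
    rw [Set.disjoint_left]
    rintro _ ⟨y, hy, rfl⟩ ⟨z, hz, hyz⟩
    linarith [(cantorStage_subset_Icc m hy).2, (cantorStage_subset_Icc m hz).1]
  have hint : IntegrableOn F (cantorStage (m + 1)) :=
    hF.integrableOn_Icc.mono_set (cantorStage_subset_Icc _)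
  have hint' (c : ℝ) : IntegrableOn (fun y => F ((y + c) / 3)) (cantorStage m) :=
    (by fun_prop : Continuous fun y => F ((y + c) / 3)).integrableOn_Icc.mono_set
      (cantorStage_subset_Icc _)
  rw [hsplit] at hint ⊢
  unfold cantorAvg
  rw [setIntegral_union hdisj (hC.image_add_div three_ne_zero 2) hint.left_of_union
    hint.right_of_union, setIntegral_image_add_div hC three_pos,
    setIntegral_image_add_div hC three_pos]
  simp only [add_zero, smul_eq_mul]
  rw [integral_div, integral_add (by simpa [IntegrableOn] using hint' 0) (hint' 2)]
  ring

theorem setIntegral_cantorStage {F : ℝ → ℝ} (hF : Continuous F) (m : ℕ) :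
    ∫ x in cantorStage m, F x = (2 / 3) ^ m * ∫ x in Icc 0 1, cantorAvg^[m] F x := by
  induction m generalizing F with
  | zero => simp [cantorStage]
  | succ m ih =>
    rw [setIntegral_cantorStage_succ hF, ih (continuous_cantorAvg hF), pow_succ',
      Function.iterate_succ_apply, mul_assoc]

theorem volume_real_cantorStage (m : ℕ) : volume.real (cantorStage m) = (2 / 3) ^ m := by
  induction m with
  | zero => simp [cantorStage]
  | succ m ih =>
    have := setIntegral_cantorStage_succ (F := fun _ => (1 : ℝ)) continuous_const m
    norm_num [cantorAvg, ih] at this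
    rw [this, pow_succ']

theorem volume_real_Bset_succ (k : ℕ) : volume.real (Bset (k + 1)) = (2 / 3) ^ k / 3 := by
  rw [Bset, Nat.add_sub_cancel, measureReal_sdiff (cantorStage_antitone k.le_succ)
    (measurableSet_cantorStage _)
    ((measure_mono (cantorStage_subset_Icc k)).trans_lt measure_Icc_lt_top).ne,
    volume_real_cantorStage, volume_real_cantorStage, pow_succ]
  ring

theorem abs_cantorAvg_sub_le {F : ℝ → ℝ} {δ ε : ℝ}
    (hF : ∀ u ∈ Icc (0 : ℝ) 1, ∀ v ∈ Icc (0 : ℝ) 1, |u - v| ≤ δ / 3 → |F u - F v| ≤ ε)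
    {y z : ℝ} (hy : y ∈ Icc 0 1) (hz : z ∈ Icc 0 1) (hyz : |y - z| ≤ δ) :
    |cantorAvg F y - cantorAvg F z| ≤ ε := by
  have hpiece (c : ℝ) (hc0 : 0 ≤ c) (hc2 : c ≤ 2) :
      |F ((y + c) / 3) - F ((z + c) / 3)| ≤ ε := by
    refine hF _ ⟨by linarith [hy.1], by linarith [hy.2]⟩ _
      ⟨by linarith [hz.1], by linarith [hz.2]⟩ ?_
    rwa [← sub_div, add_sub_add_right_eq_sub, abs_div, abs_of_pos (by norm_num : (0 : ℝ) < 3),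
      div_le_div_iff_of_pos_right three_pos]
  have h0 := hpiece 0 le_rfl zero_le_two
  have h2 := hpiece 2 zero_le_two le_rfl
  simp only [add_zero] at h0
  rw [abs_le] at h0 h2 ⊢
  unfold cantorAvg
  constructor <;> linarith [h0.1, h0.2, h2.1, h2.2]

theorem abs_cantorAvg_iterate_sub_le {F : ℝ → ℝ} {δ ε : ℝ} (m : ℕ)
    (hF : ∀ u ∈ Icc (0 : ℝ) 1, ∀ v ∈ Icc (0 : ℝ) 1, |u - v| ≤ δ / 3 ^ m → |F u - F v| ≤ ε)
    {y z : ℝ} (hy : y ∈ Icc 0 1) (hz : z ∈ Icc 0 1) (hyz : |y - z| ≤ δ) :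
    |cantorAvg^[m] F y - cantorAvg^[m] F z| ≤ ε := by
  induction m generalizing F δ with
  | zero => exact hF y hy z hz (by simpa using hyz)
  | succ m ih =>
    refine ih (fun u hu v hv huv => abs_cantorAvg_sub_le ?_ hu hv huv) hyz
    simpa [pow_succ, div_div] using hF

theorem eventually_abs_cantorAvg_iterate_sub_le {F : ℝ → ℝ} (hF : Continuous F) {ε : ℝ}
    (hε : 0 < ε) : ∀ᶠ m in atTop, ∀ y ∈ Icc (0 : ℝ) 1, ∀ z ∈ Icc (0 : ℝ) 1,
      |cantorAvg^[m] F y - cantorAvg^[m] F z| ≤ ε := by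
  obtain ⟨δ, hδ, hFδ⟩ := Metric.uniformContinuousOn_iff.1
    (isCompact_Icc.uniformContinuousOn_of_continuous hF.continuousOn) ε hε
  obtain ⟨m₀, hm₀⟩ := exists_pow_lt_of_lt_one hδ (by norm_num : (1 / 3 : ℝ) < 1)
  filter_upwards [eventually_ge_atTop m₀] with m hm y hy z hz
  refine abs_cantorAvg_iterate_sub_le (δ := 1) m (fun u hu v hv huv => ?_) hy hz ?_
  · have : (1 / 3 : ℝ) ^ m ≤ (1 / 3) ^ m₀ := pow_le_pow_of_le_one (by norm_num) (by norm_num) hm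
    exact (hFδ u hu v hv (by rw [dist_eq]; simp only [one_div, inv_pow] at *; linarith)).le
  · rw [abs_le]; constructor <;> linarith [hy.1, hy.2, hz.1, hz.2]

noncomputable def cantorMap (x : ℝ) : ℝ :=
  ofDigits fun i => (![0, 2] : Fin 2 → Fin 3) (digits x 2 i)

theorem measurable_cantorMap : Measurable cantorMap :=
  continuous_ofDigits.measurable.comp (by unfold digits; fun_prop)

theorem cantorMap_mem_cantorSet (x : ℝ) : cantorMap x ∈ cantorSet :=
  ofDigits_zero_two_sequence_mem_cantorSet fun i => by
    generalize digits x 2 i = d; fin_cases d <;> decide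

theorem cantorMap_add_div_two {y : ℝ} (hy : y ∈ Ico 0 1) (d : Fin 2) :
    cantorMap ((y + d) / 2) = (cantorMap y + 2 * d) / 3 := by
  have h0 : digits ((y + d) / 2) 2 0 = d := by simpa using digits_add_div_zero (b := 2) hy d
  have hs (i : ℕ) : digits ((y + d) / 2) 2 (i + 1) = digits y 2 i := by
    simpa using digits_add_div_succ (b := 2) hy.1 d i
  rw [cantorMap, ofDigits_eq_sum_add_ofDigits _ 1]
  simp only [hs, h0, Finset.range_one, Finset.sum_singleton, ofDigitsTerm]
  fin_cases d <;> norm_num [cantorMap] <;> ring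

noncomputable def cantorMeasure : Measure ℝ := (volume.restrict (Ico 0 1)).map cantorMap

instance : IsProbabilityMeasure cantorMeasure :=
  Measure.isProbabilityMeasure_map measurable_cantorMap.aemeasurable

theorem ae_mem_cantorSet : ∀ᵐ x ∂cantorMeasure, x ∈ cantorSet :=
  (ae_map_iff measurable_cantorMap.aemeasurable isClosed_cantorSet.measurableSet).2
    (ae_of_all _ cantorMap_mem_cantorSet)

theorem cantorMeasure_cantorSet : cantorMeasure cantorSet = 1 := by
  rw [← measure_univ (μ := cantorMeasure)]
  exact (ae_iff_measure_eq isClosed_cantorSet.measurableSet.nullMeasurableSet).1 ae_mem_cantorSet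

theorem ae_mem_Icc_cantorMeasure : ∀ᵐ x ∂cantorMeasure, x ∈ Icc 0 1 :=
  ae_mem_cantorSet.mono fun _ hx => cantorSet_subset_unitInterval hx

theorem integrable_cantorMeasure {g : ℝ → ℝ} (hg : Continuous g) : Integrable g cantorMeasure := by
  rw [← Measure.restrict_eq_self_of_ae_mem ae_mem_Icc_cantorMeasure]
  exact hg.integrableOn_Icc

theorem integral_cantorMeasure {g : ℝ → ℝ} (hg : Continuous g) :
    ∫ x, g x ∂cantorMeasure = ∫ t in Ico 0 1, g (cantorMap t) :=
  integral_map measurable_cantorMap.aemeasurable hg.aestronglyMeasurable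

theorem integrableOn_comp_cantorMap {g : ℝ → ℝ} (hg : Continuous g) :
    IntegrableOn (fun t => g (cantorMap t)) (Ico 0 1) :=
  (integrable_map_measure hg.aestronglyMeasurable measurable_cantorMap.aemeasurable).1
    (integrable_cantorMeasure hg)

theorem integral_cantorAvg {H : ℝ → ℝ} (hH : Continuous H) :
    ∫ x, cantorAvg H x ∂cantorMeasure = ∫ x, H x ∂cantorMeasure := by
  have hI := measurableSet_Ico (a := (0 : ℝ)) (b := 1)
  have hdisj : Disjoint ((fun y : ℝ => (y + 0) / 2) '' Ico 0 1)
      ((fun y : ℝ => (y + 1) / 2) '' Ico 0 1) := by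
    rw [Set.disjoint_left]
    rintro _ ⟨y, hy, rfl⟩ ⟨z, hz, hyz⟩
    linarith [hy.2, hz.1]
  have hint := integrableOn_comp_cantorMap hH
  have hshift (c : ℝ) (hc : c = 0 ∨ c = 1) :
      ∫ y in Ico 0 1, H (cantorMap ((y + c) / 2)) =
        ∫ y in Ico 0 1, H ((cantorMap y + 2 * c) / 3) := by
    refine setIntegral_congr_fun hI fun y hy => ?_
    rcases hc with rfl | rfl
    · simpa using congrArg H (cantorMap_add_div_two hy 0)
    · simpa using congrArg H (cantorMap_add_div_two hy 1)
  rw [integral_cantorMeasure hH, integral_cantorMeasure (continuous_cantorAvg hH)]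
  rw [Ico_zero_one_eq_union_image] at hint ⊢
  rw [setIntegral_union hdisj (hI.image_add_div two_ne_zero 1) hint.left_of_union
    hint.right_of_union, setIntegral_image_add_div hI two_pos,
    setIntegral_image_add_div hI two_pos, hshift 0 (Or.inl rfl), hshift 1 (Or.inr rfl)]
  rw [← Ico_zero_one_eq_union_image]
  unfold cantorAvg
  rw [integral_div,
    integral_add (integrableOn_comp_cantorMap (g := fun x => H (x / 3)) (by fun_prop))
    (integrableOn_comp_cantorMap (g := fun x => H ((x + 2) / 3)) (by fun_prop))]
  simp only [mul_zero, add_zero, mul_one, smul_eq_mul]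
  ring

theorem integral_cantorAvg_iterate {H : ℝ → ℝ} (hH : Continuous H) (m : ℕ) :
    ∫ x, cantorAvg^[m] H x ∂cantorMeasure = ∫ x, H x ∂cantorMeasure := by
  induction m generalizing H with
  | zero => rfl
  | succ m ih =>
    rw [Function.iterate_succ_apply, ih (continuous_cantorAvg hH), integral_cantorAvg hH]

theorem tendsto_integral_cantorAvg_iterate {F : ℝ → ℝ} (hF : Continuous F) :
    Tendsto (fun m => ∫ x in Icc 0 1, cantorAvg^[m] F x) atTop
      (𝓝 (∫ x, F x ∂cantorMeasure)) := by
  refine Metric.tendsto_nhds.2 fun ε hε => ?_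
  filter_upwards [eventually_abs_cantorAvg_iterate_sub_le hF (half_pos hε)] with m hm
  rw [dist_eq, ← integral_cantorAvg_iterate hF m]
  refine (abs_integral_sub_integral_le (ae_restrict_mem measurableSet_Icc)
    ae_mem_Icc_cantorMeasure (continuous_cantorAvg_iterate hF m).integrableOn_Icc
    (integrable_cantorMeasure (continuous_cantorAvg_iterate hF m)) hm).trans_lt (half_lt_self hε)

theorem tendsto_setAverage_Bset {F : ℝ → ℝ} (hF : Continuous F) :
    Tendsto (fun k => ⨍ x in Bset k, F x) atTop (𝓝 (∫ x, F x ∂cantorMeasure)) := by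
  have hb := tendsto_integral_cantorAvg_iterate hF
  have havg (k : ℕ) : ⨍ x in Bset (k + 1), F x = 3 * (∫ x in Icc 0 1, cantorAvg^[k] F x) -
      2 * ∫ x in Icc 0 1, cantorAvg^[k + 1] F x := by
    rw [setAverage_eq, volume_real_Bset_succ, Bset, Nat.add_sub_cancel,
      setIntegral_sdiff (measurableSet_cantorStage _)
        (hF.integrableOn_Icc.mono_set (cantorStage_subset_Icc k)) (cantorStage_antitone k.le_succ),
      setIntegral_cantorStage hF, setIntegral_cantorStage hF, smul_eq_mul, pow_succ]
    field_simp
  rw [← tendsto_add_atTop_iff_nat 1]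
  convert (hb.const_mul 3).sub ((hb.comp (tendsto_add_atTop_nat 1)).const_mul 2) using 1
  · exact funext havg
  · congr 1; ring

theorem neg_mul_psiα (α β : ℝ) (n : ℕ) (x : ℝ) :
    -β * psiα α n x = ∑ k ∈ Finset.Icc 1 n, (Bset k).indicator (fun _ => k * (β * α)) x := by
  simp only [psiα, psi, neg_mul, mul_neg, Finset.mul_sum, Finset.sum_neg_distrib, neg_neg]
  refine Finset.sum_congr rfl fun k _ => ?_
  by_cases hx : x ∈ Bset k <;> simp [hx]
  ring

theorem setIntegral_mul_exp_neg_psiα {F : ℝ → ℝ} (hF : Continuous F) (α β : ℝ) (n : ℕ) :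
    ∫ x in Icc 0 1, F x * exp (-β * psiα α n x) =
      (∫ x in Icc 0 1, F x) +
        ∑ k ∈ Finset.Icc 1 n, (exp (β * α) ^ k - 1) * ∫ x in Bset k, F x := by
  have hexp (x : ℝ) : F x * exp (-β * psiα α n x) = F x +
      ∑ k ∈ Finset.Icc 1 n, (Bset k).indicator (fun y => (exp (β * α) ^ k - 1) * F y) x := by
    rw [neg_mul_psiα, exp_sum_indicator_of_pairwiseDisjoint (pairwise_disjoint_Bset.set_pairwise _),
      mul_add, mul_one, Finset.mul_sum]
    simp only [exp_nat_mul, indicator_mul_left, mul_comm (F x)]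
  have hint (k : ℕ) : IntegrableOn ((Bset k).indicator fun y => (exp (β * α) ^ k - 1) * F y)
      (Icc 0 1) :=
    (hF.integrableOn_Icc.const_mul _).indicator (measurableSet_Bset k)
  simp_rw [hexp]
  rw [integral_add hF.integrableOn_Icc (integrable_finsetSum _ fun k _ => hint k),
    integral_finsetSum _ fun k _ => hint k]
  congr 1
  refine Finset.sum_congr rfl fun k _ => ?_
  rw [setIntegral_indicator (measurableSet_Bset k), inter_eq_right.2 (Bset_subset_Icc k),
    integral_const_mul]

noncomputable def gibbsWeight (α β : ℝ) (k : ℕ) : ℝ := (exp (β * α) ^ k - 1) * volume.real (Bset k)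

theorem gibbsWeight_nonneg {α β : ℝ} (hr : 1 ≤ exp (β * α)) (k : ℕ) : 0 ≤ gibbsWeight α β k :=
  mul_nonneg (sub_nonneg.2 (one_le_pow₀ hr)) measureReal_nonneg

theorem Zf_eq_one_add_sum_gibbsWeight (α β : ℝ) (n : ℕ) :
    Zf α β n = 1 + ∑ k ∈ Finset.Icc 1 n, gibbsWeight α β k := by
  simpa [Zf, gibbsWeight] using
    setIntegral_mul_exp_neg_psiα (F := fun _ => 1) continuous_const α β n

theorem setIntegral_mul_gibbs_density {F : ℝ → ℝ} (hF : Continuous F) (α β : ℝ) (n : ℕ) :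
    ∫ x in Icc 0 1, F x * (exp (-β * psiα α n x) / Zf α β n) =
      ((∫ x in Icc 0 1, F x) +
          ∑ k ∈ Finset.range n, gibbsWeight α β (k + 1) * ⨍ x in Bset (k + 1), F x) /
        (1 + ∑ k ∈ Finset.range n, gibbsWeight α β (k + 1)) := by
  have hsum (g : ℕ → ℝ) : ∑ k ∈ Finset.Icc 1 n, g k = ∑ k ∈ Finset.range n, g (k + 1) := by
    rw [Finset.range_eq_Ico, Finset.sum_Ico_add', zero_add, Finset.Ico_add_one_right_eq_Icc]
  simp_rw [mul_div_assoc']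
  rw [integral_div, setIntegral_mul_exp_neg_psiα hF, Zf_eq_one_add_sum_gibbsWeight, hsum, hsum]
  congr 2
  refine Finset.sum_congr rfl fun k _ => ?_
  rw [gibbsWeight, mul_assoc, ← smul_eq_mul (volume.real _), measure_smul_setAverage _
    ((measure_mono (Bset_subset_Icc _)).trans_lt measure_Icc_lt_top).ne]

theorem not_summable_gibbsWeight {α β : ℝ} (hr : 3 / 2 < exp (β * α)) :
    ¬Summable fun k => gibbsWeight α β (k + 1) := by
  set r := exp (β * α)
  have hlow (k : ℕ) : r / 3 * (2 * r / 3) ^ k - 1 ≤ gibbsWeight α β (k + 1) := by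
    have h23 : (2 / 3 : ℝ) ^ k ≤ 1 := pow_le_one₀ (by norm_num) (by norm_num)
    rw [gibbsWeight, volume_real_Bset_succ, pow_succ, show 2 * r / 3 = r * (2 / 3) by ring, mul_pow]
    nlinarith
  have htend : Tendsto (fun k => gibbsWeight α β (k + 1)) atTop atTop := by
    refine tendsto_atTop_mono hlow ?_
    simpa [sub_eq_add_neg] using tendsto_atTop_add_const_right _ (-1)
      ((tendsto_pow_atTop_atTop_of_one_lt (by linarith : 1 < 2 * r / 3)).const_mul_atTop
        (by positivity : 0 < r / 3))
  exact fun hs => not_tendsto_atTop_of_tendsto_nhds hs.tendsto_atTop_zero htend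

theorem stmt15 (α β : ℝ) (hα : 0 < α) (hβc : hc / α < β) :
    ∃ μs : Measure ℝ, IsProbabilityMeasure μs ∧
      (∀ f : ℝ → ℝ, ContinuousOn f (Set.Icc 0 1) →
        Tendsto (fun n => ∫ x in Set.Icc (0:ℝ) 1,
          f x * (Real.exp (-β * psiα α n x) / Zf α β n)) atTop (nhds (∫ x, f x ∂μs))) ∧
      μs (⋂ m : ℕ, cantorStage m) = 1 := by
  have hr : 3 / 2 < exp (β * α) := by
    rw [← exp_log (by norm_num : (0 : ℝ) < 3 / 2)]
    exact exp_lt_exp.2 ((div_lt_iff₀ hα).1 hβc)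
  refine ⟨cantorMeasure, inferInstance, fun f hf => ?_,
    by rw [iInter_cantorStage, cantorMeasure_cantorSet]⟩
  obtain ⟨F, hF, hfF⟩ : ∃ F : ℝ → ℝ, Continuous F ∧ EqOn f F (Icc 0 1) :=
    ⟨IccExtend zero_le_one ((Icc 0 1).domRestrict f), continuous_IccExtend_iff.2 hf.domRestrict,
      fun x hx => by rw [IccExtend_of_mem zero_le_one _ hx]; rfl⟩
  rw [integral_congr_ae (ae_mem_Icc_cantorMeasure.mono fun x hx => hfF hx)]
  have hfF_int (n : ℕ) : ∫ x in Icc 0 1, f x * (exp (-β * psiα α n x) / Zf α β n) =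
      ∫ x in Icc 0 1, F x * (exp (-β * psiα α n x) / Zf α β n) :=
    setIntegral_congr_fun measurableSet_Icc fun x hx => by rw [hfF hx]
  simp_rw [hfF_int, setIntegral_mul_gibbs_density hF]
  exact tendsto_add_sum_div_add_sum_of_not_summable _ _
    (fun k => gibbsWeight_nonneg (by linarith) (k + 1)) (not_summable_gibbsWeight hr)
    ((tendsto_setAverage_Bset hF).comp (tendsto_add_atTop_nat 1))
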